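/- arXiv:2604.27529 — 4 statements merged into one kernel-verified Lean document; each statement's English description precedes it below -/
import Mathlib

section
/- Let v be a nonzero vector in a real inner product space and ε a perturbation with decomposition ε = ε_∥ + ε_⊥, where ε_∥ = αv is parallel to v and ε_⊥ is orthogonal to v. If ‖ε_⊥‖ ≥ ‖v‖ and ‖ε_∥‖ ≤ K‖v‖ for some K ≥ 0 (and v + ε ≠ 0), then the normalized vectors satisfy ‖(v+ε)/‖v+ε‖ − v/‖v‖‖ ≥ 1/√((1+K)² + 1). -/
/-!
Split `v + ε = p + ε⊥` with `p = (1 + α) v` orthogonal to `ε⊥`. Pairing the difference of the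
unit vectors with `ε⊥` kills the `v`-term and leaves `‖ε⊥‖² / ‖v + ε‖`, so by Cauchy–Schwarz the
difference has norm at least `‖ε⊥‖ / ‖v + ε‖`, the sine of the angle between `v + ε` and `v`.
By Pythagoras and `‖p‖ ≤ (1 + K)‖v‖ ≤ (1 + K)‖ε⊥‖`, that sine is at least `1 / √((1 + K)² + 1)`.
-/

open RealInnerProductSpace

section

variable {E : Type*} [NormedAddCommGroup E] [InnerProductSpace ℝ E]

theorem inner_div_norm_mul_norm_le_norm_normalize_sub {x y w : E} (hyw : ⟪y, w⟫ = 0) :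
    ⟪x, w⟫ / (‖x‖ * ‖w‖) ≤ ‖‖x‖⁻¹ • x - ‖y‖⁻¹ • y‖ := by
  rcases eq_or_ne w 0 with rfl | hw
  · simp
  have hpair : ⟪‖x‖⁻¹ • x - ‖y‖⁻¹ • y, w⟫ = ⟪x, w⟫ / ‖x‖ := by
    rw [inner_sub_left, real_inner_smul_left, real_inner_smul_left, hyw]
    ring
  rw [← div_div, div_le_iff₀ (norm_pos_iff.mpr hw), ← hpair]
  exact real_inner_le_norm _ _

theorem norm_div_norm_add_le_norm_normalize_sub {p w y : E} (hpw : ⟪p, w⟫ = 0)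
    (hyw : ⟪y, w⟫ = 0) : ‖w‖ / ‖p + w‖ ≤ ‖‖p + w‖⁻¹ • (p + w) - ‖y‖⁻¹ • y‖ := by
  have hpair : ⟪p + w, w⟫ = ‖w‖ ^ 2 := by
    rw [inner_add_left, hpw, real_inner_self_eq_norm_sq, zero_add]
  calc ‖w‖ / ‖p + w‖ = ⟪p + w, w⟫ / (‖p + w‖ * ‖w‖) := by
        rcases eq_or_ne ‖w‖ 0 with hw | hw
        · simp [hw]
        · rw [hpair]
          field_simp
    _ ≤ _ := inner_div_norm_mul_norm_le_norm_normalize_sub hyw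

theorem one_div_sqrt_sq_add_one_le_norm_div_norm_add {p w : E} {c : ℝ} (hpw : ⟪p, w⟫ = 0)
    (hw : w ≠ 0) (hp : ‖p‖ ≤ c * ‖w‖) : 1 / √(c ^ 2 + 1) ≤ ‖w‖ / ‖p + w‖ := by
  have hpyth : ‖p + w‖ ^ 2 = ‖p‖ ^ 2 + ‖w‖ ^ 2 := by
    rw [sq, sq, sq, norm_add_sq_eq_norm_sq_add_norm_sq_real hpw]
  have hw_pos : 0 < ‖w‖ := norm_pos_iff.mpr hw
  have hpw_pos : 0 < ‖p + w‖ := by nlinarith [sq_nonneg ‖p‖, norm_nonneg (p + w)]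
  have hsq : ‖p + w‖ ^ 2 ≤ (√(c ^ 2 + 1) * ‖w‖) ^ 2 := by
    rw [mul_pow, Real.sq_sqrt (by positivity), hpyth]
    nlinarith [norm_nonneg p]
  have hle : ‖p + w‖ ≤ √(c ^ 2 + 1) * ‖w‖ :=
    (pow_le_pow_iff_left₀ hpw_pos.le (by positivity) two_ne_zero).mp hsq
  rw [div_le_div_iff₀ (by positivity) hpw_pos]
  linarith

end

theorem angular_collapse_general {E : Type*} [NormedAddCommGroup E] [InnerProductSpace ℝ E]
    (v ε εpar εperp : E) (α K : ℝ)
    (hv : v ≠ 0)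
    (hdec : ε = εpar + εperp)
    (hpar : εpar = α • v)
    (hperp : (inner ℝ εperp v : ℝ) = 0)
    (hK : 0 ≤ K)
    (hdom : ‖v‖ ≤ ‖εperp‖)
    (hparbd : ‖εpar‖ ≤ K * ‖v‖) :
    1 / Real.sqrt ((1 + K) ^ 2 + 1) ≤ ‖‖v + ε‖⁻¹ • (v + ε) - ‖v‖⁻¹ • v‖ := by
  have hsplit : v + ε = (v + εpar) + εperp := by rw [hdec, add_assoc]
  have hv_perp : ⟪v, εperp⟫ = 0 := by rw [real_inner_comm, hperp]
  have hp_perp : ⟪v + εpar, εperp⟫ = 0 := by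
    rw [hpar, inner_add_left, real_inner_smul_left, hv_perp, mul_zero, add_zero]
  have hperp_ne : εperp ≠ 0 := norm_pos_iff.mp ((norm_pos_iff.mpr hv).trans_le hdom)
  have hp_le : ‖v + εpar‖ ≤ (1 + K) * ‖εperp‖ :=
    calc ‖v + εpar‖ ≤ ‖v‖ + ‖εpar‖ := norm_add_le _ _
      _ ≤ (1 + K) * ‖v‖ := by linarith
      _ ≤ (1 + K) * ‖εperp‖ := by gcongr
  rw [hsplit]
  exact (one_div_sqrt_sq_add_one_le_norm_div_norm_add hp_perp hperp_ne hp_le).trans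
    (norm_div_norm_add_le_norm_normalize_sub hp_perp hv_perp)

/-- Angular collapse lower bound: if the perturbation dominates in the orthogonal
direction and its parallel component is bounded by `K‖v‖`, the unit direction of
`v + ε` deviates from that of `v` by at least `1/√((1+K)² + 1)`. -/
theorem angular_collapse {E : Type*} [NormedAddCommGroup E] [InnerProductSpace ℝ E]
    (v ε εpar εperp : E) (α K : ℝ)
    (hv : v ≠ 0)
    (hdec : ε = εpar + εperp)
    (hpar : εpar = α • v)
    (hperp : (inner ℝ εperp v : ℝ) = 0)
    (hK : 0 ≤ K)
    (hdom : ‖v‖ ≤ ‖εperp‖)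
    (hparbd : ‖εpar‖ ≤ K * ‖v‖)
    (hne : v + ε ≠ 0) :
    1 / Real.sqrt ((1 + K) ^ 2 + 1) ≤ ‖‖v + ε‖⁻¹ • (v + ε) - ‖v‖⁻¹ • v‖ :=
  angular_collapse_general v ε εpar εperp α K hv hdec hpar hperp hK hdom hparbd
end

section
/- Let v, ε be vectors with ε = αv + ε_⊥, ⟨ε_⊥, v⟩ = 0, v ≠ 0, |α| ≤ K, and ‖ε_⊥‖ ≥ ‖v‖. Then the inner product of the unit vectors satisfies ⟨v/‖v‖, (v+ε)/‖v+ε‖⟩ ≤ (1+K)/√((1+K)²+1). -/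
/-!
Write `v + ε = (1 + α) • v + ε⊥`. By Pythagoras `‖v + ε‖ = ‖v‖ √((1 + α)² + ρ²)` with
`ρ = ‖ε⊥‖ / ‖v‖ ≥ 1`, so the inner product of the unit vectors is `(1 + α) / √((1 + α)² + ρ²)`.
This is at most `|1 + α| / √((1 + α)² + 1)`, and `t ↦ t / √(t² + 1)` is monotone on `t ≥ 0`,
while `|1 + α| ≤ 1 + K`.
-/

open RealInnerProductSpace

theorem div_sqrt_sq_add_one_le_of_le {t s : ℝ} (ht : 0 ≤ t) (hts : t ≤ s) :
    t / √(t ^ 2 + 1) ≤ s / √(s ^ 2 + 1) := by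
  rw [div_le_div_iff₀ (by positivity) (by positivity),
    ← pow_le_pow_iff_left₀ (by positivity) (mul_nonneg (ht.trans hts) (Real.sqrt_nonneg _))
      two_ne_zero, mul_pow, mul_pow,
    Real.sq_sqrt (by positivity), Real.sq_sqrt (by positivity)]
  nlinarith [pow_le_pow_left₀ ht hts 2]

theorem div_sqrt_sq_add_sq_le {t s ρ : ℝ} (hρ : 1 ≤ ρ) (hts : |t| ≤ s) :
    t / √(t ^ 2 + ρ ^ 2) ≤ s / √(s ^ 2 + 1) :=
  calc t / √(t ^ 2 + ρ ^ 2)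
      ≤ |t| / √(t ^ 2 + ρ ^ 2) := by gcongr; exact le_abs_self t
    _ ≤ |t| / √(|t| ^ 2 + 1) := by
        rw [sq_abs]; gcongr; nlinarith
    _ ≤ s / √(s ^ 2 + 1) := div_sqrt_sq_add_one_le_of_le (abs_nonneg t) hts

theorem inner_normalize_smul_add_of_inner_eq_zero {E : Type*} [NormedAddCommGroup E]
    [InnerProductSpace ℝ E] {v u : E} (a : ℝ) (hv : v ≠ 0) (hu : ⟪u, v⟫ = 0) :
    ⟪‖v‖⁻¹ • v, ‖a • v + u‖⁻¹ • (a • v + u)⟫ = a / √(a ^ 2 + (‖u‖ / ‖v‖) ^ 2) := by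
  have hinner : ⟪v, a • v + u⟫ = a * ‖v‖ ^ 2 := by
    rw [inner_add_right, real_inner_smul_right, real_inner_comm u, hu,
      real_inner_self_eq_norm_sq, add_zero]
  have hnorm : ‖a • v + u‖ = ‖v‖ * √(a ^ 2 + (‖u‖ / ‖v‖) ^ 2) := by
    have hpyth : ‖a • v + u‖ ^ 2 = ‖v‖ ^ 2 * (a ^ 2 + (‖u‖ / ‖v‖) ^ 2) := by
      rw [norm_add_sq_real, real_inner_smul_left, real_inner_comm u, hu, norm_smul,
        Real.norm_eq_abs, mul_pow, sq_abs]
      field_simp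
      ring
    rw [← Real.sqrt_sq (norm_nonneg (a • v + u)), hpyth, Real.sqrt_mul (by positivity),
      Real.sqrt_sq (norm_nonneg v)]
  rw [real_inner_smul_left, real_inner_smul_right, hinner, hnorm]
  field_simp

/-- Upper bound on the inner product of the normalized perturbed and original
vectors: `⟪v̂, ŵ⟫ ≤ (1+K)/√((1+K)²+1)` when the orthogonal noise dominates. -/
theorem inner_unit_vectors_upper_bound {E : Type*} [NormedAddCommGroup E]
    [InnerProductSpace ℝ E]
    (v ε εperp : E) (α K : ℝ)
    (hv : v ≠ 0)
    (hdec : ε = α • v + εperp)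
    (hperp : (inner ℝ εperp v : ℝ) = 0)
    (hα : |α| ≤ K)
    (hdom : ‖v‖ ≤ ‖εperp‖) :
    (inner ℝ (‖v‖⁻¹ • v) (‖v + ε‖⁻¹ • (v + ε)) : ℝ) ≤
      (1 + K) / Real.sqrt ((1 + K) ^ 2 + 1) := by
  have hw : v + ε = (1 + α) • v + εperp := by rw [hdec]; module
  have hρ : 1 ≤ ‖εperp‖ / ‖v‖ := (one_le_div (norm_pos_iff.2 hv)).2 hdom
  have hα' : |1 + α| ≤ 1 + K := (abs_add_le 1 α).trans (by rw [abs_one]; linarith)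
  rw [hw, inner_normalize_smul_add_of_inner_eq_zero (1 + α) hv hperp]
  exact div_sqrt_sq_add_sq_le hρ hα'
end

section
/- Let G be an n×n positive definite real matrix, c ∈ ℝⁿ a nonzero vector, and U an n×(n−1) matrix whose columns form an orthonormal basis of the orthogonal complement of c. Then det(Uᵀ G U) = det(G) · (cᵀ G⁻¹ c) / (cᵀ c). -/
/-!
Complete `U` to the square matrix `Q = [U | c]`: then `QᵀQ = diag(1, cᵀc)`, and
`L = [Uᵀ; cᵀ/(cᵀc)]` is a left, hence two-sided, inverse of `Q`. The matrix `UᵀGU` is the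
upper-left block of `A = QᵀGQ`, with `det A = cᵀc · det G` and `A⁻¹ = LG⁻¹Lᵀ`, whose lower-right
entry is `cᵀG⁻¹c / (cᵀc)²`. Jacobi's complementary minor identity `det A₁₁ = det A · det (A⁻¹)₂₂`
combines the two.
-/

open Matrix

namespace Matrix

section Blocks

variable {R : Type*} [CommRing R] {m n : Type*} [Fintype m] [Fintype n] [DecidableEq m]
  [DecidableEq n]

theorem det_toBlocks₁₁_eq_det_mul_det_toBlocks₂₂_of_mul_eq_one
    {A B : Matrix (m ⊕ n) (m ⊕ n) R} (hAB : A * B = 1) :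
    A.toBlocks₁₁.det = A.det * B.toBlocks₂₂.det := by
  have key : A * fromBlocks 1 B.toBlocks₁₂ 0 B.toBlocks₂₂ =
      fromBlocks A.toBlocks₁₁ 0 A.toBlocks₂₁ 1 := by
    have h₁₂ := congrArg toBlocks₁₂ hAB
    have h₂₂ := congrArg toBlocks₂₂ hAB
    rw [← fromBlocks_toBlocks A, ← fromBlocks_toBlocks B] at h₁₂ h₂₂
    simp only [fromBlocks_multiply, toBlocks_fromBlocks₁₂, toBlocks_fromBlocks₂₂,
      ← fromBlocks_one] at h₁₂ h₂₂
    conv_lhs => rw [← fromBlocks_toBlocks A]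
    rw [fromBlocks_multiply]
    simp [h₁₂, h₂₂]
  simpa [det_fromBlocks_zero₂₁, det_fromBlocks_zero₁₂] using (congrArg det key).symm

theorem det_transpose_mul_mul_of_equiv (e : m ≃ n) (Q : Matrix m n R) (M : Matrix m m R) :
    (Qᵀ * M * Q).det = (Qᵀ * Q).det * M.det := by
  have hsq : ∀ M : Matrix m m R, (Qᵀ * M * Q).det = (Q.submatrix id e).det ^ 2 * M.det := by
    intro M
    have : (Qᵀ * M * Q).submatrix e e = (Q.submatrix id e)ᵀ * M * Q.submatrix id e := by
      rw [submatrix_mul _ _ _ id _ Function.bijective_id,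
        submatrix_mul _ _ _ id _ Function.bijective_id, submatrix_id_id, transpose_submatrix]
    rw [← det_submatrix_equiv_self e, this, det_mul, det_mul, det_transpose]
    ring
  have hQQ := hsq 1
  rw [Matrix.mul_one, det_one, mul_one] at hQQ
  rw [hsq, hQQ]

end Blocks

section Orthogonal

variable {R : Type*} [CommRing R] {m k ι : Type*} [Fintype m] {U : Matrix m k R} {c : m → R}

theorem replicateRow_mul_eq_zero_of_vecMul_eq_zero (hcU : c ᵥ* U = 0) :
    replicateRow ι c * U = 0 := by
  rw [← replicateRow_vecMul, hcU, replicateRow_zero]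

theorem transpose_mul_replicateCol_eq_zero_of_vecMul_eq_zero (hcU : c ᵥ* U = 0) :
    Uᵀ * replicateCol ι c = 0 := by
  rw [← transpose_replicateRow, ← transpose_mul, replicateRow_mul_eq_zero_of_vecMul_eq_zero hcU,
    transpose_zero]

theorem replicateRow_mul_mul_replicateCol_apply (M : Matrix m m R) (i j : ι) :
    (replicateRow ι c * M * replicateCol ι c) i j = c ⬝ᵥ (M *ᵥ c) := by
  rw [Matrix.mul_assoc, ← replicateCol_mulVec, replicateRow_mul_replicateCol_apply]

end Orthogonal

section Hyperplane

variable {K : Type*} [Field K] {m k : Type*} [Fintype m] [DecidableEq k] {U : Matrix m k K}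
  {c : m → K}

theorem fromRows_mul_fromCols_replicateCol_eq_one (hUU : Uᵀ * U = 1) (hcU : c ᵥ* U = 0)
    (hc : c ⬝ᵥ c ≠ 0) :
    fromRows Uᵀ ((c ⬝ᵥ c)⁻¹ • replicateRow (Fin 1) c) * fromCols U (replicateCol (Fin 1) c)
      = 1 := by
  have hcc : (c ⬝ᵥ c)⁻¹ • (replicateRow (Fin 1) c * replicateCol (Fin 1) c) = 1 := by
    ext i j
    fin_cases i; fin_cases j
    simp [hc]
  rw [fromRows_mul_fromCols, hUU, transpose_mul_replicateCol_eq_zero_of_vecMul_eq_zero hcU,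
    smul_mul, replicateRow_mul_eq_zero_of_vecMul_eq_zero hcU, smul_zero, smul_mul, hcc,
    fromBlocks_one]

theorem det_transpose_mul_mul_of_orthogonal_compl [Fintype k] [DecidableEq m]
    (e : m ≃ k ⊕ Fin 1) {G : Matrix m m K} (hG : IsUnit G.det) (hUU : Uᵀ * U = 1)
    (hcU : c ᵥ* U = 0) (hc : c ⬝ᵥ c ≠ 0) :
    (Uᵀ * G * U).det = G.det * (c ⬝ᵥ (G⁻¹ *ᵥ c)) / (c ⬝ᵥ c) := by
  set Q := fromCols U (replicateCol (Fin 1) c)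
  set L := fromRows Uᵀ ((c ⬝ᵥ c)⁻¹ • replicateRow (Fin 1) c)
  have hLQ : L * Q = 1 := fromRows_mul_fromCols_replicateCol_eq_one hUU hcU hc
  have hQL : Q * L = 1 := (fromCols_mul_fromRows_eq_one_comm e _ _ _ _).mpr hLQ
  have hinv : (Qᵀ * G * Q) * (L * G⁻¹ * Lᵀ) = 1 := by
    calc (Qᵀ * G * Q) * (L * G⁻¹ * Lᵀ) = Qᵀ * G * (Q * L) * G⁻¹ * Lᵀ := by
          simp only [Matrix.mul_assoc]
      _ = (L * Q)ᵀ := by rw [hQL, Matrix.mul_one, Matrix.mul_assoc Qᵀ, mul_nonsing_inv G hG,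
          Matrix.mul_one, transpose_mul]
      _ = 1 := by rw [hLQ, transpose_one]
  have h₁₁ : (Qᵀ * G * Q).toBlocks₁₁ = Uᵀ * G * U := by
    rw [transpose_fromCols, fromRows_mul, fromRows_mul_fromCols, toBlocks_fromBlocks₁₁]
  have h₂₂ : (L * G⁻¹ * Lᵀ).toBlocks₂₂.det = (c ⬝ᵥ c)⁻¹ ^ 2 * (c ⬝ᵥ (G⁻¹ *ᵥ c)) := by
    rw [transpose_fromRows, fromRows_mul, fromRows_mul_fromCols, toBlocks_fromBlocks₂₂,
      det_fin_one, transpose_smul, transpose_replicateRow, Matrix.smul_mul, Matrix.smul_mul,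
      Matrix.mul_smul, smul_apply, smul_apply, replicateRow_mul_mul_replicateCol_apply,
      smul_eq_mul, smul_eq_mul]
    ring
  have hQQ : (Qᵀ * Q).det = c ⬝ᵥ c := by
    rw [transpose_fromCols, fromRows_mul_fromCols, hUU,
      transpose_mul_replicateCol_eq_zero_of_vecMul_eq_zero hcU, transpose_replicateCol,
      replicateRow_mul_eq_zero_of_vecMul_eq_zero hcU, det_fromBlocks_zero₂₁, det_one, one_mul,
      det_fin_one, replicateRow_mul_replicateCol_apply]
  calc (Uᵀ * G * U).det = (Qᵀ * G * Q).det * (L * G⁻¹ * Lᵀ).toBlocks₂₂.det := by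
        rw [← h₁₁, det_toBlocks₁₁_eq_det_mul_det_toBlocks₂₂_of_mul_eq_one hinv]
    _ = (c ⬝ᵥ c) * G.det * ((c ⬝ᵥ c)⁻¹ ^ 2 * (c ⬝ᵥ (G⁻¹ *ᵥ c))) := by
        rw [det_transpose_mul_mul_of_equiv e, hQQ, h₂₂]
    _ = G.det * (c ⬝ᵥ (G⁻¹ *ᵥ c)) / (c ⬝ᵥ c) := by
        field_simp

end Hyperplane

end Matrix

/-- Determinant of the restriction of a positive definite quadratic form to the
hyperplane orthogonal to `c`: `det(UᵀGU) = det(G)·(cᵀG⁻¹c)/(cᵀc)` when the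
columns of `U` form an orthonormal basis of `c^⊥`. -/
theorem restricted_gram_determinant (n : ℕ)
    (G : Matrix (Fin n) (Fin n) ℝ) (hG : G.PosDef)
    (c : Fin n → ℝ) (hc : c ≠ 0)
    (U : Matrix (Fin n) (Fin (n - 1)) ℝ)
    (hUU : Uᵀ * U = 1)
    (hcU : Matrix.vecMul c U = 0) :
    (Uᵀ * G * U).det = G.det * (c ⬝ᵥ (G⁻¹ *ᵥ c)) / (c ⬝ᵥ c) := by
  obtain ⟨i, -⟩ := Function.ne_iff.mp hc
  have hn : n = n - 1 + 1 := by have := i.pos; omega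
  exact det_transpose_mul_mul_of_orthogonal_compl ((finCongr hn).trans finSumFinEquiv.symm)
    hG.det_pos.ne'.isUnit hUU hcU (dotProduct_self_eq_zero.not.mpr hc)
end

section
/- Let f : 2^V → ℝ be a monotone nondecreasing submodular set function on a finite ground set V with f(∅) = 0, and let S_greedy be the set obtained by k steps of the greedy algorithm that iteratively adds the element with the largest marginal gain. Then f(S_greedy) ≥ (1 − (1 − 1/k)^k) · max_{|S| = k} f(S) ≥ (1 − 1/e) · max_{|S| = k} f(S). -/
lemma greedy_marginal_sum {V : Type*} [DecidableEq V] (f : Finset V → ℝ)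
    (hmono : ∀ A B : Finset V, A ⊆ B → f A ≤ f B)
    (hsub : ∀ A B : Finset V, A ⊆ B → ∀ x ∉ B,
      f (insert x B) - f B ≤ f (insert x A) - f A)
    (A S : Finset V) :
    f (A ∪ S) ≤ f A + ∑ x ∈ S, (f (insert x A) - f A) := by
  induction S using Finset.induction_on with
  | empty => simp
  | @insert y S' hy ih =>
    rw [Finset.union_insert, Finset.sum_insert hy]
    have h1 : f (insert y (A ∪ S')) ≤ f (A ∪ S') + (f (insert y A) - f A) := by
      by_cases hyA : y ∈ A ∪ S'
      · rw [Finset.insert_eq_self.mpr hyA]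
        have := hmono A (insert y A) (Finset.subset_insert y A)
        linarith
      · have := hsub A (A ∪ S') Finset.subset_union_left y hyA
        linarith
    linarith

/-- Nemhauser–Wolsey–Fisher greedy guarantee: for a monotone submodular set
function with `f(∅) = 0`, the `k`-step greedy solution achieves at least a
`(1 − (1 − 1/k)^k) ≥ (1 − 1/e)` fraction of the optimum over sets of size `k`. -/
theorem greedy_submodular_guarantee {V : Type*} [Fintype V] [DecidableEq V]
    (f : Finset V → ℝ)
    (hmono : ∀ A B : Finset V, A ⊆ B → f A ≤ f B)
    (hsub : ∀ A B : Finset V, A ⊆ B → ∀ x ∉ B,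
      f (insert x B) - f B ≤ f (insert x A) - f A)
    (hempty : f ∅ = 0)
    (k : ℕ) (hk : 0 < k)
    (g : ℕ → Finset V)
    (hg0 : g 0 = ∅)
    (hgreedy : ∀ t < k, ∃ x, x ∉ g t ∧ g (t + 1) = insert x (g t) ∧
      ∀ y, f (insert y (g t)) ≤ f (insert x (g t))) :
    ∀ S : Finset V, S.card = k →
      (1 - (1 - 1 / (k : ℝ)) ^ k) * f S ≤ f (g k) ∧
      (1 - 1 / Real.exp 1) * f S ≤ (1 - (1 - 1 / (k : ℝ)) ^ k) * f S := by
  intro S hS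
  have hk0 : (0:ℝ) < k := by exact_mod_cast hk
  have hk1 : (1:ℝ) ≤ k := by exact_mod_cast hk
  have hfS0 : 0 ≤ f S := by
    have := hmono ∅ S (Finset.empty_subset S); linarith [hempty]
  have hfac : 0 ≤ 1 - 1/(k:ℝ) := by
    rw [sub_nonneg]
    exact div_le_one_of_le₀ hk1 (le_of_lt hk0)
  have key : ∀ t < k, f S - f (g (t+1)) ≤ (1 - 1/(k:ℝ)) * (f S - f (g t)) := by
    intro t ht
    obtain ⟨x, hx, hg1, hmax⟩ := hgreedy t ht
    have h1 : f S ≤ f (g t ∪ S) := hmono S _ Finset.subset_union_right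
    have h2 := greedy_marginal_sum f hmono hsub (g t) S
    have h3 : ∑ y ∈ S, (f (insert y (g t)) - f (g t))
        ≤ ∑ y ∈ S, (f (g (t+1)) - f (g t)) := by
      refine Finset.sum_le_sum fun y _ => ?_
      rw [hg1]; linarith [hmax y]
    have h4 : ∑ y ∈ S, (f (g (t+1)) - f (g t)) = (k:ℝ) * (f (g (t+1)) - f (g t)) := by
      rw [Finset.sum_const, hS, nsmul_eq_mul]
    have h5 : f S - f (g t) ≤ (k:ℝ) * (f (g (t+1)) - f (g t)) := by linarith
    have h6 : (f S - f (g t)) / k ≤ f (g (t+1)) - f (g t) := by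
      rw [div_le_iff₀ hk0]; linarith [h5]
    have expand : (1 - 1/(k:ℝ)) * (f S - f (g t))
        = (f S - f (g t)) - (f S - f (g t))/k := by ring
    linarith
  have main : ∀ t ≤ k, f S - f (g t) ≤ (1 - 1/(k:ℝ))^t * f S := by
    intro t
    induction t with
    | zero => intro _; simp [hg0, hempty]
    | succ t ih =>
      intro ht
      have ht' : t < k := Nat.lt_of_succ_le ht
      have h1 := key t ht'
      have h2 := ih (le_of_lt ht')
      calc f S - f (g (t+1)) ≤ (1 - 1/(k:ℝ)) * (f S - f (g t)) := h1
        _ ≤ (1 - 1/(k:ℝ)) * ((1 - 1/(k:ℝ))^t * f S) :=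
            mul_le_mul_of_nonneg_left h2 hfac
        _ = (1 - 1/(k:ℝ))^(t+1) * f S := by ring
  have hmain := main k le_rfl
  constructor
  · nlinarith [hmain]
  · have hle : (1 - 1/(k:ℝ)) ≤ Real.exp (-(1/(k:ℝ))) := by
      have := Real.add_one_le_exp (-(1/(k:ℝ))); linarith
    have hpow : (1 - 1/(k:ℝ))^k ≤ Real.exp (-(1/(k:ℝ)))^k :=
      pow_le_pow_left₀ hfac hle k
    have hexp : Real.exp (-(1/(k:ℝ)))^k = Real.exp (-1) := by
      rw [← Real.exp_nat_mul]
      congr 1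
      field_simp
    have hinv : Real.exp (-1) = 1 / Real.exp 1 := by
      rw [Real.exp_neg, one_div]
    have : (1 - 1/(k:ℝ))^k ≤ 1 / Real.exp 1 := by
      rw [← hinv, ← hexp]; exact hpow
    nlinarith [hfS0, this]
end
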